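/- Let T be a finite tree on m ≥ 2 vertices in which every vertex has degree at most 3. Then T has an edge e such that each of the two connected components obtained by deleting e from T has at most ⌊(2m+1)/3⌋ vertices (equivalently, each of the two components has at least ⌈(m−1)/3⌉ vertices). -/

import Mathlib

/-!
Write `branch u v` for the vertices on `v`'s side of the edge `uv`. Choose an edge `uv`
minimising the larger of its two sides, say `branch u v` of size `M`. Apart from `v` itself,
`branch u v` is covered by the branches `branch v w` of the at most two other edges `vw` at `v`,
so one of them has size `s` with `M ≤ 2s + 1`; also `s ≤ M - 1`. If `3M > 2m + 1`, then both
`s` and `m - s` are smaller than `M`, so `vw` contradicts the choice of `uv`.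
-/

namespace SimpleGraph

variable {V : Type*} {G : SimpleGraph V} {u v w x : V}

def branch (G : SimpleGraph V) (u v : V) : Set V :=
  {x | (G.deleteEdges {s(u, v)}).Reachable x v}

lemma mem_branch_self : v ∈ G.branch u v := Reachable.refl v

lemma IsBridge.notMem_branch (h : G.IsBridge s(u, v)) : u ∉ G.branch u v := h

lemma supp_connectedComponentMk_deleteEdges (h : (G.deleteEdges {s(u, v)}).Reachable x v) :
    ((G.deleteEdges {s(u, v)}).connectedComponentMk x).supp = G.branch u v := by
  ext y
  simp only [ConnectedComponent.mem_supp_iff, ConnectedComponent.eq, branch, Set.mem_ofPred_eq]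
  exact ⟨fun hy => hy.trans h, fun hy => hy.trans h.symm⟩

lemma Walk.reachable_deleteEdges_or :
    ∀ {x : V} (_ : G.Walk x v),
      (G.deleteEdges {s(u, v)}).Reachable x u ∨ (G.deleteEdges {s(u, v)}).Reachable x v
  | _, .nil => .inr .rfl
  | x, .cons (v := y) h p => by
    by_cases he : s(x, y) = s(u, v)
    · rcases Sym2.eq_iff.mp he with ⟨rfl, -⟩ | ⟨rfl, -⟩
      · exact .inl .rfl
      · exact .inr .rfl
    · have hxy : (G.deleteEdges {s(u, v)}).Adj x y := deleteEdges_adj.mpr ⟨h, he⟩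
      exact p.reachable_deleteEdges_or.imp hxy.reachable.trans hxy.reachable.trans

lemma Connected.reachable_deleteEdges_or (hG : G.Connected) (u v x : V) :
    (G.deleteEdges {s(u, v)}).Reachable x u ∨ (G.deleteEdges {s(u, v)}).Reachable x v :=
  (hG x v).some.reachable_deleteEdges_or

lemma ncard_branch_add_ncard_branch [Finite V] (hG : G.Connected) (hbr : G.IsBridge s(u, v)) :
    (G.branch u v).ncard + (G.branch v u).ncard = Nat.card V := by
  have hdisj : Disjoint (G.branch u v) (G.branch v u) := by
    refine Set.disjoint_left.mpr fun x hxv hxu => hbr ?_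
    rw [branch, Sym2.eq_swap] at hxu
    exact hxu.symm.trans hxv
  have hunion : G.branch u v ∪ G.branch v u = Set.univ := by
    refine Set.eq_univ_of_forall fun x => ?_
    rw [branch, branch, Sym2.eq_swap (a := v)]
    exact (hG.reachable_deleteEdges_or u v x).symm
  rw [← Set.ncard_union_eq hdisj, hunion, Set.ncard_univ]

lemma insert_branch_subset_branch (huv : G.Adj u v) (hbr : G.IsBridge s(u, v)) (hwu : w ≠ u) :
    insert v (G.branch v u) ⊆ G.branch w v := by
  classical
  rintro x (rfl | hx)
  · exact mem_branch_self
  obtain ⟨p⟩ : (G.deleteEdges {s(u, v)}).Reachable x u := by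
    rwa [branch, Set.mem_ofPred_eq, Sym2.eq_swap] at hx
  have hv : v ∉ p.support := fun hv => hbr (p.dropUntil v hv).reachable.symm
  have hp : ∀ e ∈ p.edges, e ∈ (G.deleteEdges {s(w, v)}).edgeSet := by
    intro e he
    have he' := p.edges_subset_edgeSet he
    rw [edgeSet_deleteEdges] at he' ⊢
    refine ⟨he'.1, fun hwv => hv ?_⟩
    rw [Set.mem_singleton_iff.mp hwv] at he
    exact p.snd_mem_support_of_mem_edges he
  have huv' : (G.deleteEdges {s(w, v)}).Adj u v :=
    deleteEdges_adj.mpr ⟨huv, by simp [hwu.symm, huv.ne]⟩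
  exact (p.transfer _ hp).reachable.trans huv'.reachable

lemma Walk.exists_mem_branch :
    ∀ {x : V} (_ : (G.deleteEdges {s(u, v)}).Walk x v), x ≠ v →
      ∃ w, G.Adj v w ∧ w ≠ u ∧ x ∈ G.branch v w
  | _, .nil, hx => absurd rfl hx
  | x, .cons (v := y) h p, hx => by
    obtain ⟨hxy, hne⟩ := deleteEdges_adj.mp h
    by_cases hy : y = v
    · subst hy
      refine ⟨x, hxy.symm, ?_, mem_branch_self⟩
      rintro rfl
      exact hne rfl
    · obtain ⟨w, hvw, hwu, hyw⟩ := p.exists_mem_branch hy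
      have hxy' : (G.deleteEdges {s(v, w)}).Adj x y :=
        deleteEdges_adj.mpr ⟨hxy, by simp [hx, hy]⟩
      exact ⟨w, hvw, hwu, hxy'.reachable.trans hyw⟩

lemma branch_subset_insert_biUnion [DecidableEq V] [Fintype (G.neighborSet v)] :
    G.branch u v ⊆ insert v (⋃ w ∈ (G.neighborFinset v).erase u, G.branch v w) := by
  rintro x ⟨p⟩
  by_cases hx : x = v
  · exact Or.inl hx
  obtain ⟨w, hvw, hwu, hxw⟩ := p.exists_mem_branch hx
  exact Or.inr (Set.mem_biUnion (by simpa [hwu] using hvw) hxw)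

lemma ncard_branch_le_one_add_sum [Finite V] [DecidableEq V] [Fintype (G.neighborSet v)] :
    (G.branch u v).ncard ≤ 1 + ∑ w ∈ (G.neighborFinset v).erase u, (G.branch v w).ncard :=
  calc (G.branch u v).ncard
      ≤ (insert v (⋃ w ∈ (G.neighborFinset v).erase u, G.branch v w)).ncard :=
        Set.ncard_le_ncard branch_subset_insert_biUnion
    _ ≤ (⋃ w ∈ (G.neighborFinset v).erase u, G.branch v w).ncard + 1 :=
        Set.ncard_insert_le _ _
    _ ≤ _ := by
        rw [add_comm]
        exact Nat.add_le_add_left (Finset.set_ncard_biUnion_le _ _) 1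

lemma exists_adj_two_mul_ncard_branch_ge [Finite V] [Fintype (G.neighborSet v)]
    (hdeg : G.degree v ≤ 3) (huv : G.Adj u v) (hbig : 2 ≤ (G.branch u v).ncard) :
    ∃ w, G.Adj v w ∧ w ≠ u ∧ (G.branch u v).ncard ≤ 1 + 2 * (G.branch v w).ncard := by
  classical
  set N := (G.neighborFinset v).erase u with hN_def
  have hN : N.card ≤ 2 := by
    rw [hN_def, Finset.card_erase_of_mem ((G.mem_neighborFinset v u).mpr huv.symm),
      card_neighborFinset_eq_degree]
    omega
  have hsum : (G.branch u v).ncard ≤ 1 + ∑ w ∈ N, (G.branch v w).ncard :=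
    ncard_branch_le_one_add_sum
  obtain ⟨w, hwN, hwmax⟩ := N.exists_max_image (fun w => (G.branch v w).ncard) <| by
    by_contra hN
    rw [Finset.not_nonempty_iff_eq_empty.mp hN, Finset.sum_empty] at hsum
    omega
  have hsum_le : ∑ w ∈ N, (G.branch v w).ncard ≤ 2 * (G.branch v w).ncard :=
    (N.sum_le_card_nsmul _ _ hwmax).trans (Nat.mul_le_mul_right _ hN)
  obtain ⟨hwu, hvw⟩ := Finset.mem_erase.mp hwN
  exact ⟨w, (G.mem_neighborFinset v w).mp hvw, hwu, hsum.trans (by omega)⟩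

theorem IsTree.exists_adj_ncard_branch_lt [Finite V] [Fintype (G.neighborSet v)]
    (hT : G.IsTree) (hdeg : G.degree v ≤ 3) (huv : G.Adj u v)
    (hbig : (2 * Nat.card V + 1) / 3 < (G.branch u v).ncard) :
    ∃ w, G.Adj v w ∧ (G.branch v w).ncard < (G.branch u v).ncard ∧
      (G.branch w v).ncard < (G.branch u v).ncard := by
  have hbridge {a b : V} (hab : G.Adj a b) : G.IsBridge s(a, b) :=
    isAcyclic_iff_forall_adj_isBridge.mp hT.isAcyclic hab
  have hV : 0 < Nat.card V := Nat.card_pos_iff.mpr ⟨⟨u⟩, inferInstance⟩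
  obtain ⟨w, hvw, hwu, hw⟩ := exists_adj_two_mul_ncard_branch_ge hdeg huv (by omega)
  have hshrink : (G.branch v u).ncard + 1 ≤ (G.branch w v).ncard := by
    rw [← Set.ncard_insert_of_notMem (hbridge huv.symm).notMem_branch]
    exact Set.ncard_le_ncard (insert_branch_subset_branch huv (hbridge huv) hwu)
  have h₁ := ncard_branch_add_ncard_branch hT.connected (hbridge huv)
  have h₂ := ncard_branch_add_ncard_branch hT.connected (hbridge hvw)
  exact ⟨w, hvw, by omega, by omega⟩

end SimpleGraph

theorem tree_balanced_edge_cut_general {V : Type*} [Fintype V]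
    (G : SimpleGraph V) [DecidableRel G.Adj]
    (hT : G.IsTree) (hdeg : ∀ v : V, G.degree v ≤ 3)
    (m : ℕ) (hm : Fintype.card V = m) (hm2 : 2 ≤ m) :
    ∃ u v : V, G.Adj u v ∧
      ∀ w : V,
        ((G.deleteEdges {s(u, v)}).connectedComponentMk w).supp.ncard
          ≤ (2 * m + 1) / 3 := by
  subst hm
  have : Nontrivial V := Fintype.one_lt_card_iff_nontrivial.mp hm2
  have : Nonempty G.Dart := by
    obtain ⟨v⟩ := ‹Nontrivial V›.to_nonempty
    obtain ⟨w, hvw⟩ := hT.connected.preconnected.exists_adj_of_nontrivial v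
    exact ⟨⟨(v, w), hvw⟩⟩
  obtain ⟨⟨⟨u, v⟩, huv⟩, hmin⟩ := Finite.exists_min
    fun d : G.Dart => max (G.branch d.fst d.snd).ncard (G.branch d.snd d.fst).ncard
  have hsmall {a b : V} (hab : G.Adj a b)
      (hle : (G.branch a b).ncard ≤ max (G.branch u v).ncard (G.branch v u).ncard) :
      (G.branch a b).ncard ≤ (2 * Fintype.card V + 1) / 3 := by
    by_contra! hbig
    rw [← Nat.card_eq_fintype_card] at hbig
    obtain ⟨w, hbw, h₁, h₂⟩ := hT.exists_adj_ncard_branch_lt (hdeg b) hab hbig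
    have := hmin ⟨(b, w), hbw⟩
    simp only [max_le_iff] at this hle
    omega
  refine ⟨u, v, huv, fun x => ?_⟩
  rcases hT.connected.reachable_deleteEdges_or u v x with hx | hx
  · rw [Sym2.eq_swap] at hx ⊢
    rw [SimpleGraph.supp_connectedComponentMk_deleteEdges hx]
    exact hsmall huv.symm (le_max_right _ _)
  · rw [SimpleGraph.supp_connectedComponentMk_deleteEdges hx]
    exact hsmall huv (le_max_left _ _)

/-- A finite tree on `m ≥ 2` vertices with maximum degree 3 has an
edge whose deletion leaves two connected components, each with at most
`⌊(2m+1)/3⌋` vertices. -/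
theorem tree_balanced_edge_cut {V : Type*} [Fintype V] [DecidableEq V]
    (G : SimpleGraph V) [DecidableRel G.Adj]
    (hT : G.IsTree) (hdeg : ∀ v : V, G.degree v ≤ 3)
    (m : ℕ) (hm : Fintype.card V = m) (hm2 : 2 ≤ m) :
    ∃ u v : V, G.Adj u v ∧
      ∀ w : V,
        ((G.deleteEdges {s(u, v)}).connectedComponentMk w).supp.ncard
          ≤ (2 * m + 1) / 3 :=
  tree_balanced_edge_cut_general G hT hdeg m hm hm2
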